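/- Let G be a bounded Vilenkin group and (α_k) a sequence of positive integers with sup_k ρ(α_k) = κ < ∞. Then sup_k ‖D_{α_k}‖_{L¹(G)} ≤ c(κ + 1) < ∞ for a constant c depending only on sup m_k, and consequently the maximal operator S̃* f = sup_k |S_{α_k} f| is bounded from L^∞(G) to L^∞(G). -/

import Mathlib

open MeasureTheory Complex Real

def Mseq (m : ℕ → ℕ) : ℕ → ℕ
  | 0 => 1
  | k + 1 => m k * Mseq m k

def digit (m : ℕ → ℕ) (n j : ℕ) : ℕ := n / Mseq m j % m j

noncomputable def hi (m : ℕ → ℕ) (n : ℕ) : ℕ := sSup {j | digit m n j ≠ 0}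

noncomputable def lo (m : ℕ → ℕ) (n : ℕ) : ℕ := sInf {j | digit m n j ≠ 0}

noncomputable def rho (m : ℕ → ℕ) (n : ℕ) : ℕ := hi m n - lo m n

abbrev Gm (m : ℕ → ℕ) := ∀ k, ZMod (m k)

instance (n : ℕ) : MeasurableSpace (ZMod n) := ⊤

noncomputable def rad (m : ℕ → ℕ) (j : ℕ) (x : Gm m) : ℂ :=
  Complex.exp (2 * Real.pi * Complex.I * ((x j).val : ℂ) / (m j : ℂ))

noncomputable def vil (m : ℕ → ℕ) (n : ℕ) (x : Gm m) : ℂ :=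
  ∏ᶠ j, rad m j x ^ digit m n j

noncomputable def Dker (m : ℕ → ℕ) (n : ℕ) (x : Gm m) : ℂ :=
  ∑ k ∈ Finset.range n, vil m k x

/-- The defining property of the normalized Haar measure on the Vilenkin group:
every cylinder set `I_n(x)` has measure `1 / M_n`. -/
def IsVilenkinHaar (m : ℕ → ℕ) (μ : Measure (Gm m)) : Prop :=
  ∀ (n : ℕ) (x : Gm m), μ {y : Gm m | ∀ j < n, y j = x j} = (Mseq m n : ENNReal)⁻¹

noncomputable def vilCoeff (m : ℕ → ℕ) (μ : Measure (Gm m)) (f : Gm m → ℂ) (j : ℕ) : ℂ :=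
  ∫ t, f t * (starRingEnd ℂ) (vil m j t) ∂μ

noncomputable def Svil (m : ℕ → ℕ) (μ : Measure (Gm m)) (f : Gm m → ℂ) (n : ℕ) (x : Gm m) : ℂ :=
  ∑ j ∈ Finset.range n, vilCoeff m μ f j * vil m j x

/-! Write `n = ∑ nⱼ Mⱼ` in mixed radix and let `rⱼ` be the `j`-th Rademacher function. Splitting
off the top digit gives `D_n = (∑_{t < n_N} r_N^t) D_{M_N} + r_N^{n_N} D_{n mod M_N}`, and Paley's
lemma `D_{Mⱼ} = Mⱼ 1_{Iⱼ(0)}` shows that each `|D_{Mⱼ}|` has integral one. Hence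
`|D_n| ≤ ∑ⱼ nⱼ |D_{Mⱼ}|`, so `‖D_n‖₁ ≤ ∑ⱼ nⱼ ≤ m_* (ρ(n) + 1)`, since only the digits at
positions between `⟨n⟩` and `|n|` are nonzero. The `L^∞` bound follows from
`S_n f(x) = ∫ f(t) conj (D_n(t - x)) dt`. -/

section

variable {m : ℕ → ℕ}

lemma Mseq_succ (k : ℕ) : Mseq m (k + 1) = m k * Mseq m k := rfl

lemma neZero_of_two_le (hm : ∀ k, 2 ≤ m k) (k : ℕ) : NeZero (m k) :=
  ⟨by have := hm k; omega⟩

lemma Mseq_pos [∀ k, NeZero (m k)] (j : ℕ) : 0 < Mseq m j := by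
  induction j with
  | zero => exact Nat.one_pos
  | succ k ih => exact Nat.mul_pos (NeZero.pos _) ih

lemma lt_Mseq (hm : ∀ k, 2 ≤ m k) (j : ℕ) : j < Mseq m j := by
  induction j with
  | zero => exact Nat.one_pos
  | succ k ih => rw [Mseq_succ]; nlinarith [hm k]

lemma Mseq_dvd_Mseq {i j : ℕ} (hij : i ≤ j) : Mseq m i ∣ Mseq m j := by
  induction j, hij using Nat.le_induction with
  | base => rfl
  | succ k _ ih => exact ih.mul_left _

lemma Mseq_mono [∀ k, NeZero (m k)] : Monotone (Mseq m) :=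
  fun _ _ hij => Nat.le_of_dvd (Mseq_pos _) (Mseq_dvd_Mseq hij)

lemma digit_lt {j : ℕ} [NeZero (m j)] (n : ℕ) : digit m n j < m j :=
  Nat.mod_lt _ (NeZero.pos _)

lemma digit_eq_zero_of_lt {n j : ℕ} (h : n < Mseq m j) : digit m n j = 0 := by
  simp [digit, Nat.div_eq_of_lt h]

lemma digit_mod_Mseq {n j N : ℕ} (hj : j < N) : digit m (n % Mseq m N) j = digit m n j := by
  have hdvd : Mseq m j * m j ∣ Mseq m N := by
    simpa only [Mseq_succ, mul_comm] using Mseq_dvd_Mseq (m := m) hj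
  simp only [digit, ← Nat.mod_mul_right_div_self, Nat.mod_mod_of_dvd _ hdvd]

lemma digit_of_lt_Mseq_succ [∀ k, NeZero (m k)] {n N : ℕ} (hn : n < Mseq m (N + 1)) :
    digit m n N = n / Mseq m N :=
  Nat.mod_eq_of_lt <| (Nat.div_lt_iff_lt_mul (Mseq_pos N)).2 hn

lemma rad_eq_stdAddChar (j : ℕ) [NeZero (m j)] (x : Gm m) :
    rad m j x = ZMod.stdAddChar (x j) := by
  rw [ZMod.stdAddChar_apply, ZMod.toCircle_apply, rad]

lemma norm_rad (j : ℕ) [NeZero (m j)] (x : Gm m) : ‖rad m j x‖ = 1 := by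
  rw [rad_eq_stdAddChar, ZMod.stdAddChar_apply, Circle.norm_coe]

lemma rad_add (j : ℕ) [NeZero (m j)] (x y : Gm m) :
    rad m j (x + y) = rad m j x * rad m j y := by
  simp only [rad_eq_stdAddChar, Pi.add_apply, AddChar.map_add_eq_mul]

lemma rad_neg (j : ℕ) [NeZero (m j)] (x : Gm m) :
    rad m j (-x) = starRingEnd ℂ (rad m j x) := by
  rw [rad_eq_stdAddChar, rad_eq_stdAddChar, ZMod.stdAddChar_apply, ZMod.stdAddChar_apply,
    Pi.neg_apply, AddChar.map_neg_eq_inv, Circle.coe_inv_eq_conj]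

lemma geom_sum_rad (j : ℕ) [NeZero (m j)] (x : Gm m) :
    ∑ t ∈ Finset.range (m j), rad m j x ^ t = if x j = 0 then (m j : ℂ) else 0 := by
  split_ifs with hx
  · simp [rad_eq_stdAddChar, hx]
  · have hpow : rad m j x ^ m j = 1 := by
      rw [rad_eq_stdAddChar, ← AddChar.map_nsmul_eq_pow, nsmul_eq_mul, ZMod.natCast_self,
        zero_mul, AddChar.map_zero_eq_one]
    have hne : rad m j x ≠ 1 := by
      rwa [rad_eq_stdAddChar, ← AddChar.map_zero_eq_one (ZMod.stdAddChar (N := m j)),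
        ZMod.injective_stdAddChar.ne_iff]
    rw [geom_sum_eq hne, hpow, sub_self, zero_div]

lemma vil_eq_prod_range [∀ k, NeZero (m k)] {n L : ℕ} (hn : n < Mseq m L) (x : Gm m) :
    vil m n x = ∏ j ∈ Finset.range L, rad m j x ^ digit m n j := by
  refine finprod_eq_prod_of_mulSupport_subset _ fun j hj => ?_
  by_contra hjL
  have hj0 : digit m n j = 0 :=
    digit_eq_zero_of_lt (hn.trans_le (Mseq_mono (by simpa using hjL)))
  exact hj (by simp only [hj0, pow_zero])

lemma vil_mul_Mseq_add [∀ k, NeZero (m k)] {q s N : ℕ} (hq : q < m N) (hs : s < Mseq m N)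
    (x : Gm m) : vil m (q * Mseq m N + s) x = rad m N x ^ q * vil m s x := by
  have hn : q * Mseq m N + s < Mseq m (N + 1) := by
    rw [Mseq_succ]; nlinarith
  have hlow : ∀ j < N, digit m (q * Mseq m N + s) j = digit m s j := fun j hj => by
    rw [← digit_mod_Mseq hj, Nat.mul_add_mod_self_right, Nat.mod_eq_of_lt hs]
  have htop : digit m (q * Mseq m N + s) N = q := by
    rw [digit_of_lt_Mseq_succ hn, add_comm, Nat.add_mul_div_right _ _ (Mseq_pos N),
      Nat.div_eq_of_lt hs, zero_add]
  rw [vil_eq_prod_range hn, vil_eq_prod_range hs, Finset.prod_range_succ, htop, mul_comm,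
    Finset.prod_congr rfl fun j hj => by rw [hlow j (Finset.mem_range.1 hj)]]

lemma norm_vil (hm : ∀ k, 2 ≤ m k) (n : ℕ) (x : Gm m) : ‖vil m n x‖ = 1 := by
  have := neZero_of_two_le hm
  rw [vil_eq_prod_range (lt_Mseq hm n), norm_prod]
  exact Finset.prod_eq_one fun j _ => by rw [norm_pow, norm_rad, one_pow]

lemma vil_sub (hm : ∀ k, 2 ≤ m k) (n : ℕ) (t x : Gm m) :
    vil m n (t - x) = vil m n t * starRingEnd ℂ (vil m n x) := by
  have := neZero_of_two_le hm
  simp only [vil_eq_prod_range (lt_Mseq hm n), map_prod, map_pow, ← Finset.prod_mul_distrib,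
    ← mul_pow, sub_eq_add_neg, rad_add, rad_neg]

lemma Dker_mul_Mseq_add [∀ k, NeZero (m k)] {q k N : ℕ} (hq : q < m N) (hk : k ≤ Mseq m N)
    (x : Gm m) :
    Dker m (q * Mseq m N + k) x = Dker m (q * Mseq m N) x + rad m N x ^ q * Dker m k x := by
  rw [Dker, Dker, Dker, Finset.sum_range_add, Finset.mul_sum]
  congr 1
  exact Finset.sum_congr rfl fun s hs =>
    vil_mul_Mseq_add hq ((Finset.mem_range.1 hs).trans_le hk) x

lemma Dker_mul_Mseq [∀ k, NeZero (m k)] {q N : ℕ} (hq : q ≤ m N) (x : Gm m) :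
    Dker m (q * Mseq m N) x = (∑ t ∈ Finset.range q, rad m N x ^ t) * Dker m (Mseq m N) x := by
  induction q with
  | zero => simp [Dker]
  | succ q ih =>
    rw [add_one_mul, Dker_mul_Mseq_add hq le_rfl, ih (by omega), Finset.sum_range_succ]
    ring

lemma Dker_Mseq [∀ k, NeZero (m k)] (j : ℕ) (x : Gm m) :
    Dker m (Mseq m j) x = if ∀ i < j, x i = 0 then (Mseq m j : ℂ) else 0 := by
  induction j with
  | zero => simp [Dker, Mseq, vil_eq_prod_range (show 0 < Mseq m 0 from Nat.one_pos)]
  | succ j ih =>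
    have hcyl : (∀ i < j + 1, x i = 0) ↔ x j = 0 ∧ ∀ i < j, x i = 0 := by
      simp only [Nat.lt_succ_iff_lt_or_eq, or_imp, forall_and, forall_eq, and_comm]
    rw [Mseq_succ, Dker_mul_Mseq le_rfl, ih, geom_sum_rad, if_congr hcyl rfl rfl]
    split_ifs <;> simp_all

lemma norm_Dker_le_sum_digit [∀ k, NeZero (m k)] {n N : ℕ} (hn : n < Mseq m N) (x : Gm m) :
    ‖Dker m n x‖ ≤ ∑ j ∈ Finset.range N, (digit m n j : ℝ) * ‖Dker m (Mseq m j) x‖ := by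
  induction N generalizing n with
  | zero =>
    obtain rfl : n = 0 := by simpa [Mseq] using hn
    simp [Dker]
  | succ N ih =>
    have hk : n % Mseq m N < Mseq m N := Nat.mod_lt _ (Mseq_pos N)
    have hq : n / Mseq m N < m N := (Nat.div_lt_iff_lt_mul (Mseq_pos N)).2 hn
    have hsplit := Dker_mul_Mseq_add hq hk.le x
    rw [Nat.div_add_mod'] at hsplit
    have hgeom : ‖∑ t ∈ Finset.range (n / Mseq m N), rad m N x ^ t‖ ≤ (n / Mseq m N : ℕ) :=
      (norm_sum_le _ _).trans (by simp [norm_rad])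
    calc ‖Dker m n x‖
        ≤ (n / Mseq m N : ℕ) * ‖Dker m (Mseq m N) x‖ + ‖Dker m (n % Mseq m N) x‖ := by
          rw [hsplit, Dker_mul_Mseq hq.le]
          refine (norm_add_le _ _).trans (add_le_add ?_ ?_)
          · rw [norm_mul]; gcongr
          · rw [norm_mul, norm_pow, norm_rad, one_pow, one_mul]
      _ ≤ (n / Mseq m N : ℕ) * ‖Dker m (Mseq m N) x‖ +
            ∑ j ∈ Finset.range N, (digit m (n % Mseq m N) j : ℝ) * ‖Dker m (Mseq m j) x‖ := by
          gcongr; exact ih hk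
      _ = ∑ j ∈ Finset.range (N + 1), (digit m n j : ℝ) * ‖Dker m (Mseq m j) x‖ := by
          rw [Finset.sum_range_succ, add_comm, digit_of_lt_Mseq_succ hn]
          congr 1
          exact Finset.sum_congr rfl fun j hj => by
            rw [digit_mod_Mseq (Finset.mem_range.1 hj)]

lemma sum_digit_le [∀ k, NeZero (m k)] {mstar n N : ℕ} (hms : ∀ k, m k ≤ mstar)
    (hn : n < Mseq m N) :
    ∑ j ∈ Finset.range N, digit m n j ≤ mstar * (rho m n + 1) := by
  set support := (Finset.range N).filter fun j => digit m n j ≠ 0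
  have hbdd : BddAbove {j | digit m n j ≠ 0} := ⟨N, fun j hj => by
    by_contra hjN
    exact hj (digit_eq_zero_of_lt (hn.trans_le (Mseq_mono (by omega))))⟩
  have hcard : support.card ≤ rho m n + 1 :=
    calc support.card ≤ (Finset.Icc (lo m n) (hi m n)).card :=
          Finset.card_le_card fun j hj =>
            Finset.mem_Icc.2 ⟨Nat.sInf_le (Finset.mem_filter.1 hj).2,
              le_csSup hbdd (Finset.mem_filter.1 hj).2⟩
      _ ≤ rho m n + 1 := by rw [Nat.card_Icc, rho]; omega
  calc ∑ j ∈ Finset.range N, digit m n j = ∑ j ∈ support, digit m n j :=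
        (Finset.sum_filter_ne_zero _).symm
    _ ≤ support.card • mstar :=
        Finset.sum_le_card_nsmul _ _ _ fun j _ => (digit_lt n).le.trans (hms j)
    _ ≤ mstar * (rho m n + 1) := by rw [smul_eq_mul, mul_comm]; gcongr

def vilCylinder (n : ℕ) (x : Gm m) : Set (Gm m) := {y | ∀ j < n, y j = x j}

lemma measurableSet_vilCylinder (n : ℕ) (x : Gm m) : MeasurableSet (vilCylinder n x) := by
  have : vilCylinder n x = ⋂ j ∈ Set.Iio n, (fun y : Gm m => y j) ⁻¹' {x j} := by
    ext y; simp [vilCylinder]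
  rw [this]
  exact .biInter (Set.to_countable _) fun j _ => measurable_pi_apply j (.singleton _)

lemma measurable_rad (j : ℕ) : Measurable (rad m j) :=
  (measurable_from_top (f := fun a : ZMod (m j) => Complex.exp (2 * π * I * a.val / m j))).comp
    (measurable_pi_apply j)

lemma measurable_vil (hm : ∀ k, 2 ≤ m k) (n : ℕ) : Measurable (vil m n) := by
  have := neZero_of_two_le hm
  simp only [funext (vil_eq_prod_range (lt_Mseq hm n))]
  exact Finset.measurable_prod _ fun j _ => (measurable_rad j).pow_const _

lemma measurable_Dker_comp_sub (hm : ∀ k, 2 ≤ m k) (n : ℕ) (x : Gm m) :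
    Measurable fun t => Dker m n (t - x) :=
  (Finset.measurable_sum _ fun k _ => measurable_vil hm k).comp (measurable_id.sub_const x)

lemma norm_Dker_le (hm : ∀ k, 2 ≤ m k) (n : ℕ) (x : Gm m) : ‖Dker m n x‖ ≤ n :=
  (norm_sum_le _ _).trans (by simp [norm_vil hm])

lemma integrable_norm_Dker_comp_sub (hm : ∀ k, 2 ≤ m k) (μ : Measure (Gm m)) [IsFiniteMeasure μ]
    (n : ℕ) (x : Gm m) : Integrable (fun t => ‖Dker m n (t - x)‖) μ :=
  .of_bound (measurable_Dker_comp_sub hm n x).norm.aestronglyMeasurable n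
    (.of_forall fun t => by simpa using norm_Dker_le hm n (t - x))

lemma norm_Dker_Mseq_sub [∀ k, NeZero (m k)] (j : ℕ) (t x : Gm m) :
    ‖Dker m (Mseq m j) (t - x)‖ = (vilCylinder j x).indicator (fun _ => (Mseq m j : ℝ)) t := by
  classical
  have hmem : (∀ i < j, (t - x) i = 0) ↔ t ∈ vilCylinder j x := by
    simp only [vilCylinder, Set.mem_ofPred_eq, Pi.sub_apply, sub_eq_zero]
  rw [Dker_Mseq, Set.indicator_apply, if_congr hmem rfl rfl]
  split_ifs <;> simp

lemma integral_norm_Dker_Mseq_sub [∀ k, NeZero (m k)] {μ : Measure (Gm m)}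
    (hμ : IsVilenkinHaar m μ) (j : ℕ) (x : Gm m) :
    ∫ t, ‖Dker m (Mseq m j) (t - x)‖ ∂μ = 1 := by
  have hM : (Mseq m j : ℝ) ≠ 0 := Nat.cast_ne_zero.2 (Mseq_pos j).ne'
  simp only [norm_Dker_Mseq_sub]
  rw [integral_indicator_const _ (measurableSet_vilCylinder j x), measureReal_def, vilCylinder,
    hμ j x, ENNReal.toReal_inv, ENNReal.toReal_natCast, smul_eq_mul, inv_mul_cancel₀ hM]

lemma integral_norm_Dker_sub_le (hm : ∀ k, 2 ≤ m k) {mstar : ℕ} (hms : ∀ k, m k ≤ mstar)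
    {μ : Measure (Gm m)} [IsFiniteMeasure μ] (hμ : IsVilenkinHaar m μ) (n : ℕ) (x : Gm m) :
    ∫ t, ‖Dker m n (t - x)‖ ∂μ ≤ mstar * (rho m n + 1) := by
  have := neZero_of_two_le hm
  have hterm : ∀ j, Integrable (fun t => (digit m n j : ℝ) * ‖Dker m (Mseq m j) (t - x)‖) μ :=
    fun j => (integrable_norm_Dker_comp_sub hm μ _ x).const_mul _
  calc ∫ t, ‖Dker m n (t - x)‖ ∂μ
      ≤ ∫ t, ∑ j ∈ Finset.range n, (digit m n j : ℝ) * ‖Dker m (Mseq m j) (t - x)‖ ∂μ :=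
        integral_mono (integrable_norm_Dker_comp_sub hm μ n x)
          (integrable_finsetSum _ fun j _ => hterm j)
          fun t => norm_Dker_le_sum_digit (lt_Mseq hm n) (t - x)
    _ = ∑ j ∈ Finset.range n, (digit m n j : ℝ) := by
        rw [integral_finsetSum _ fun j _ => hterm j]
        simp only [integral_const_mul, integral_norm_Dker_Mseq_sub hμ, mul_one]
    _ ≤ mstar * (rho m n + 1) := by
        exact_mod_cast sum_digit_le hms (lt_Mseq hm n)

lemma Svil_eq_integral (hm : ∀ k, 2 ≤ m k) {μ : Measure (Gm m)} {f : Gm m → ℂ}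
    (hf : Integrable f μ) (n : ℕ) (x : Gm m) :
    Svil m μ f n x = ∫ t, f t * starRingEnd ℂ (Dker m n (t - x)) ∂μ := by
  have hterm : ∀ j, Integrable (fun t => f t * starRingEnd ℂ (vil m j t) * vil m j x) μ :=
    fun j => (hf.mul_bdd ((Complex.continuous_conj.measurable.comp
      (measurable_vil hm j)).aestronglyMeasurable) (.of_forall fun t => by
        rw [Function.comp_apply, Complex.norm_conj, norm_vil hm])).mul_const _
  simp only [Svil, vilCoeff, ← integral_mul_const]
  rw [← integral_finsetSum _ fun j _ => hterm j]
  refine integral_congr_ae (.of_forall fun t => ?_)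
  simp only [Dker, map_sum, Finset.mul_sum, vil_sub hm, map_mul, Complex.conj_conj]
  exact Finset.sum_congr rfl fun j _ => by ring

lemma norm_Svil_le (hm : ∀ k, 2 ≤ m k) {μ : Measure (Gm m)} [IsFiniteMeasure μ]
    {f : Gm m → ℂ} {B : ℝ} (hf : AEStronglyMeasurable f μ) (hB : ∀ x, ‖f x‖ ≤ B) (n : ℕ)
    (x : Gm m) : ‖Svil m μ f n x‖ ≤ B * ∫ t, ‖Dker m n (t - x)‖ ∂μ := by
  have hfi : Integrable f μ := .of_bound hf B (.of_forall hB)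
  rw [Svil_eq_integral hm hfi, ← integral_const_mul]
  refine norm_integral_le_of_norm_le ((integrable_norm_Dker_comp_sub hm μ n x).const_mul B)
    (.of_forall fun t => ?_)
  rw [norm_mul, Complex.norm_conj]
  exact mul_le_mul_of_nonneg_right (hB t) (norm_nonneg _)

end

/-- If `sup_k ρ(α_k) = κ < ∞`, then `‖D_{α_k}‖₁ ≤ c (κ + 1)` uniformly in `k`,
and consequently the restricted maximal operator `f ↦ sup_k |S_{α_k} f|` is
bounded from `L^∞` to `L^∞`. -/
theorem stmt_13 (mstar κ : ℕ) :
    ∃ c : ℝ, 0 < c ∧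
      ∀ (m : ℕ → ℕ), (∀ k, 2 ≤ m k) → (∀ k, m k ≤ mstar) →
        ∀ (μ : Measure (Gm m)), IsProbabilityMeasure μ → IsVilenkinHaar m μ →
          ∀ (α : ℕ → ℕ), (∀ k, 1 ≤ α k) → (∀ k, rho m (α k) ≤ κ) →
            (∀ k, ∫ x, ‖Dker m (α k) x‖ ∂μ ≤ c * (κ + 1)) ∧
            ∀ (f : Gm m → ℂ) (B : ℝ), Measurable f → (∀ x, ‖f x‖ ≤ B) →
              ∀ (k : ℕ) (x : Gm m),
                ‖Svil m μ f (α k) x‖ ≤ c * (κ + 1) * B := by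
  refine ⟨mstar + 1, by positivity, fun m hm hms μ _ hμ α _ hρ => ?_⟩
  have hL1 : ∀ k x, ∫ t, ‖Dker m (α k) (t - x)‖ ∂μ ≤ (mstar + 1) * (κ + 1) := fun k x =>
    (integral_norm_Dker_sub_le hm hms hμ (α k) x).trans <| by
      gcongr
      · linarith
      · exact_mod_cast hρ k
  refine ⟨fun k => by simpa using hL1 k 0, fun f B hf hB k x => ?_⟩
  have hB0 : 0 ≤ B := (norm_nonneg _).trans (hB x)
  calc ‖Svil m μ f (α k) x‖ ≤ B * ∫ t, ‖Dker m (α k) (t - x)‖ ∂μ :=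
        norm_Svil_le hm hf.aestronglyMeasurable hB _ x
    _ ≤ B * ((mstar + 1) * (κ + 1)) := by gcongr; exact hL1 k x
    _ = (mstar + 1) * (κ + 1) * B := mul_comm _ _
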